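/- Let G = G₁ * G₂ be a free product of groups, and for s ∈ {1,2} let f_s : G_s → ℝ be bounded functions with f_s(x⁻¹) = −f_s(x). Define g : G → ℝ on a reduced word x = x₁x₂⋯x_n (with x_i in alternating factors) by g(x) = ∑ f_{s_i}(x_i), and g(1) = 0. Then g is a quasimorphism on G. -/

import Mathlib

open Monoid

/-- Rolli's function: on a free product, sum the values of the `f i` over the letters of the
unique reduced word representing an element. -/
noncomputable def rolliSum (M : Bool → Type*) [∀ i, Group (M i)] [∀ i, DecidableEq (M i)]
    (f : ∀ i, M i → ℝ) (x : CoprodI M) : ℝ :=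
  ((CoprodI.Word.equiv x).toList.map fun p => f p.1 p.2).sum

/-!
Write `x = u₁ ⋯ uₙ` as a reduced word and multiply `y` by the letters `uₙ, …, u₁` in turn.
Each letter either is prepended, or cancels against the first letter of the current word, or
merges with it into a single new letter `a * b`. Oddness of `f` makes cancellations additive,
and once a merge has happened the first letter of the result stays in the factor of `u₁`, so
the remaining letters of `x` are simply prepended. Hence the defect of the sum is
`f (a * b) - f a - f b` for at most one merge, which is bounded by `3 B`.
-/

namespace Monoid.CoprodI.Word

variable {ι : Type*} {M : ι → Type*}

section Monoid

variable [∀ i, Monoid (M i)] (f : ∀ i, M i → ℝ)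

noncomputable def letterSum (w : Word M) : ℝ :=
  (w.toList.map fun p => f p.1 p.2).sum

@[simp]
theorem letterSum_empty : letterSum f (empty : Word M) = 0 := rfl

theorem letterSum_cons {i : ι} (m : M i) (w : Word M) (hw : w.fstIdx ≠ some i) (hm : m ≠ 1) :
    letterSum f (cons m w hw hm) = f i m + letterSum f w := by
  simp [letterSum, cons]

variable [∀ i, DecidableEq (M i)]

theorem letterSum_rcons (hf1 : ∀ i, f i 1 = 0) {i : ι} (p : Pair M i) :
    letterSum f (rcons p) = f i p.head + letterSum f p.tail := by
  unfold rcons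
  split_ifs with h
  · rw [h, hf1, zero_add]
  · exact letterSum_cons f _ _ _ _

variable [DecidableEq ι]

theorem letterSum_of_smul (hf1 : ∀ i, f i 1 = 0) {i : ι} (m : M i) (w : Word M) :
    letterSum f (of m • w) =
      letterSum f w + f i (m * (equivPair i w).head) - f i (equivPair i w).head := by
  have hw := letterSum_rcons f hf1 (equivPair i w)
  rw [← equivPair_symm, Equiv.symm_apply_apply] at hw
  rw [of_smul_def, letterSum_rcons f hf1, hw]
  ring

theorem fstIdx_of_smul_of_mul_head_ne_one {i : ι} (m : M i) (w : Word M)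
    (h : m * (equivPair i w).head ≠ 1) : (of m • w).fstIdx = some i := by
  rw [of_smul_def, rcons, dif_neg h]
  exact fstIdx_cons _ _ _ _

end Monoid

variable [∀ i, Group (M i)] [DecidableEq ι] [∀ i, DecidableEq (M i)] {f : ∀ i, M i → ℝ}

theorem letterSum_prod_smul_eq_add_or_merge (hodd : ∀ i (x : M i), f i x⁻¹ = -f i x)
    (u v : Word M) :
    letterSum f (u.prod • v) = letterSum f u + letterSum f v ∨
      ∃ (i : ι) (a b : M i), letterSum f (u.prod • v) =
          letterSum f u + letterSum f v + (f i (a * b) - f i a - f i b) ∧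
        (u.prod • v).fstIdx = u.fstIdx := by
  have hf1 : ∀ i, f i 1 = 0 := fun i => self_eq_neg.mp (by simpa using hodd i 1)
  induction u using consRecOn with
  | empty => exact Or.inl (by simp [prod_empty])
  | cons i a u hu ha ih =>
    set w := u.prod • v
    set h := (equivPair i w).head with hh
    have hsmul : (cons a u hu ha).prod • v = of a • w := by rw [prod_cons, mul_smul]
    have hstep : letterSum f (of a • w) = letterSum f w + f i (a * h) - f i h :=
      letterSum_of_smul f hf1 a w
    rw [hsmul, letterSum_cons, fstIdx_cons]
    rcases ih with hadd | ⟨j, a', b', hsum, hfst⟩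
    · by_cases hcancel : a * h = 1
      · have hfh : f i h = -f i a := by rw [eq_inv_of_mul_eq_one_right hcancel, hodd]
        left
        rw [hstep, hadd, hcancel, hf1, hfh]
        ring
      · refine Or.inr ⟨i, a, h, ?_, fstIdx_of_smul_of_mul_head_ne_one a w hcancel⟩
        rw [hstep, hadd]
        ring
    · have h1 : h = 1 := by rw [hh, equivPair_eq_of_fstIdx_ne (hfst ▸ hu)]
      refine Or.inr ⟨j, a', b', ?_, fstIdx_of_smul_of_mul_head_ne_one a w ?_⟩
      · rw [hstep, hsum, h1, mul_one, hf1]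
        ring
      · rwa [← hh, h1, mul_one]

theorem letterSum_equiv_mul_eq_add_or_merge (hodd : ∀ i (x : M i), f i x⁻¹ = -f i x)
    (x y : CoprodI M) :
    letterSum f (equiv (x * y)) = letterSum f (equiv x) + letterSum f (equiv y) ∨
      ∃ (i : ι) (a b : M i), letterSum f (equiv (x * y)) =
        letterSum f (equiv x) + letterSum f (equiv y) + (f i (a * b) - f i a - f i b) := by
  have hxy : equiv (x * y) = (equiv x).prod • equiv y := by
    rw [show (equiv x).prod = x from equiv.symm_apply_apply x]
    exact mul_smul x y _
  rw [hxy]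
  exact (letterSum_prod_smul_eq_add_or_merge hodd _ _).imp_right
    fun ⟨i, a, b, hsum, _⟩ => ⟨i, a, b, hsum⟩

end Monoid.CoprodI.Word

theorem rolliSum_eq_letterSum (M : Bool → Type*) [∀ i, Group (M i)] [∀ i, DecidableEq (M i)]
    (f : ∀ i, M i → ℝ) (x : CoprodI M) :
    rolliSum M f x = CoprodI.Word.letterSum f (CoprodI.Word.equiv x) := rfl

/-- Rolli's construction: given bounded odd functions `f i` on the factors of a free product
`G₁ * G₂`, the function summing `f` over the letters of the reduced word of an element is a
quasimorphism. -/
theorem stmt16 (M : Bool → Type*) [∀ i, Group (M i)] [∀ i, DecidableEq (M i)]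
    (f : ∀ i, M i → ℝ) (B : ℝ) (hbd : ∀ i (x : M i), |f i x| ≤ B)
    (hodd : ∀ i (x : M i), f i x⁻¹ = -f i x) :
    ∃ D : ℝ, ∀ x y : CoprodI M,
      |rolliSum M f (x * y) - rolliSum M f x - rolliSum M f y| ≤ D := by
  refine ⟨3 * B, fun x y => ?_⟩
  simp only [rolliSum_eq_letterSum]
  rcases CoprodI.Word.letterSum_equiv_mul_eq_add_or_merge hodd x y with hadd | ⟨i, a, b, hsum⟩
  · rw [hadd, add_sub_cancel_left, sub_self, abs_zero]
    linarith [(abs_nonneg (f true 1)).trans (hbd true 1)]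
  · rw [hsum, add_assoc, add_sub_cancel_left, add_sub_cancel_left]
    obtain ⟨hab, hab'⟩ := abs_le.mp (hbd i (a * b))
    obtain ⟨ha, ha'⟩ := abs_le.mp (hbd i a)
    obtain ⟨hb, hb'⟩ := abs_le.mp (hbd i b)
    exact abs_le.mpr ⟨by linarith, by linarith⟩
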